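/- Let M = [π_{ij}] ∈ Π_n and let A = [α_{ij}] be the binary n²×n² matrix with α_{ij} = 1 if and only if there exist s,t ∈ {0,1,...,n−1} with i = s·n + π_{s,t} − 1 and j = t·n + π_{n+t,s} − 1. Then every column of A contains exactly one entry equal to 1. -/
import Mathlib


/-- Row `s` (with `0 ≤ s < n`) of a `(2n) × n` matrix, as an index in `Fin (2n)`. -/
def rowT (n : ℕ) (s : Fin n) : Fin (2 * n) := ⟨s.val, by have := s.isLt; omega⟩

/-- Row `n + t` (with `0 ≤ t < n`) of a `(2n) × n` matrix, as an index in `Fin (2n)`. -/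
def rowB (n : ℕ) (t : Fin n) : Fin (2 * n) := ⟨n + t.val, by have := t.isLt; omega⟩

/-- `Π_n`: every row of the `(2n) × n` matrix is a permutation of `{1,…,n}`. -/
def IsPiMatrix (n : ℕ) (M : Fin (2 * n) → Fin n → ℕ) : Prop :=
  ∀ i : Fin (2 * n), Finset.image (M i) Finset.univ = Finset.Icc 1 n

/-- A matrix is binary if all its entries are `0` or `1`. -/
def Binary01 {α β : Type*} (A : α → β → ℕ) : Prop :=
  ∀ i j, A i j = 0 ∨ A i j = 1

/-- For `M = [π_{ij}] ∈ Π_n` and the binary `n² × n²` matrix `A`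
with `α_{ij} = 1` iff `∃ s t, i = s·n + π_{s,t} − 1 ∧ j = t·n + π_{n+t,s} − 1`,
every column of `A` contains exactly one entry equal to `1`. -/
theorem cols_of_piMatrix_image (n : ℕ) (hn : 0 < n)
    (M : Fin (2 * n) → Fin n → ℕ) (hM : IsPiMatrix n M)
    (A : Fin (n ^ 2) → Fin (n ^ 2) → ℕ)
    (hbin : Binary01 A)
    (hA : ∀ i j, A i j = 1 ↔
      ∃ s t : Fin n, (i : ℕ) = s.val * n + M (rowT n s) t - 1 ∧
        (j : ℕ) = t.val * n + M (rowB n t) s - 1) :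
    ∀ j, ∃! i, A i j = 1 := by
  intro j
  have hmem : ∀ (i : Fin (2 * n)) (k : Fin n), 1 ≤ M i k ∧ M i k ≤ n := by
    intro i k
    have h : M i k ∈ Finset.Icc 1 n := by
      rw [← hM i]; exact Finset.mem_image_of_mem _ (Finset.mem_univ k)
    simpa using Finset.mem_Icc.mp h
  have hinj : ∀ i : Fin (2 * n), Function.Injective (M i) := by
    intro i
    have hcard : (Finset.image (M i) Finset.univ).card = (Finset.univ : Finset (Fin n)).card := by
      rw [hM i, Nat.card_Icc, Finset.card_univ, Fintype.card_fin]; omega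
    intro a b hab
    exact Finset.injOn_of_card_image_eq hcard
      (Finset.mem_univ a) (Finset.mem_univ b) hab
  have hjlt : j.val < n * n := lt_of_lt_of_eq j.isLt (pow_two n)
  set t : Fin n := ⟨j.val / n, Nat.div_lt_of_lt_mul (by rwa [mul_comm] at hjlt)⟩ with ht
  have hmemB : (j.val % n + 1) ∈ Finset.Icc 1 n := by
    have := Nat.mod_lt j.val hn; simp [Finset.mem_Icc]; omega
  rw [← hM (rowB n t)] at hmemB
  obtain ⟨s, -, hs⟩ := Finset.mem_image.mp hmemB
  have hdm : j.val / n * n + j.val % n = j.val := Nat.div_add_mod' j.val n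
  have hMT1 := hmem (rowT n s) t
  have hslt : (s.val + 1) * n ≤ n * n := Nat.mul_le_mul_right n (Nat.succ_le_of_lt s.isLt)
  have hsn : (s.val + 1) * n = s.val * n + n := by ring
  have hilt : s.val * n + M (rowT n s) t - 1 < n ^ 2 := by rw [pow_two]; omega
  refine ⟨⟨s.val * n + M (rowT n s) t - 1, hilt⟩, ?_, ?_⟩
  · have htv : (t : ℕ) = j.val / n := rfl
    exact (hA _ _).mpr ⟨s, t, rfl, by rw [hs, htv]; omega⟩
  · intro i' hi'
    rw [hA] at hi'
    obtain ⟨s', t', hi, hj⟩ := hi'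
    have hMB' := hmem (rowB n t') s'
    have hj' : j.val = t'.val * n + (M (rowB n t') s' - 1) := by omega
    have hr : M (rowB n t') s' - 1 < n := by omega
    have hdiv : j.val / n = t'.val := by
      rw [hj', mul_comm, Nat.mul_add_div hn, Nat.div_eq_of_lt hr]; omega
    have hmod : j.val % n = M (rowB n t') s' - 1 := by
      rw [hj', mul_comm, Nat.mul_add_mod, Nat.mod_eq_of_lt hr]
    have ht' : t' = t := by apply Fin.ext; rw [ht]; exact hdiv.symm
    subst ht'
    have hs' : s' = s := hinj (rowB n t) (by omega)
    subst hs'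
    exact Fin.ext hi
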